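/- For every prime p > 5, the harmonic number H_{⌊p/6⌋} computed in the field ℤ/pℤ is congruent to 0 modulo p if and only if p² divides 432^{p−1} − 1. -/

import Mathlib

/-- The harmonic number `H_⌊p/N⌋` computed in `ZMod p`: the sum of the
inverses of `1, 2, …, ⌊p/N⌋` in the field `ℤ/pℤ`. -/
def harmonicMod (p n : ℕ) : ZMod p :=
  ∑ j ∈ Finset.Icc 1 n, ((j : ZMod p))⁻¹

/-!
Glaisher's formula `a q_p(a) ≡ -∑_{0<k<a} H_{⌊kp/a⌋} (mod p)` for the Fermat quotient
`q_p(a) = (a^(p-1) - 1) / p`, applied to `a = 2, 3, 6` together with the reflection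
`H_{p-1-m} ≡ H_m`, gives `2 H_{⌊p/6⌋} ≡ -(4 q_p(2) + 3 q_p(3)) = -q_p(432)`.
So `H_{⌊p/6⌋} ≡ 0` exactly when `q_p(432) ≡ 0`, i.e. when `p² ∣ 432^(p-1) - 1`.
-/

open Finset

theorem Finset.prod_one_add_mul_of_sq_eq_zero {ι R : Type*} [CommRing R] {ε : R}
    (hε : ε ^ 2 = 0) (s : Finset ι) (x : ι → R) :
    ∏ i ∈ s, (1 + ε * x i) = 1 + ε * ∑ i ∈ s, x i := by
  classical
  induction s using Finset.induction_on with
  | empty => simp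
  | insert i s hi ih =>
    rw [prod_insert hi, ih, sum_insert hi]
    linear_combination x i * (∑ i ∈ s, x i) * hε

namespace ZMod

variable {p : ℕ}

theorem isUnit_two_of_odd (hodd : Odd p) : IsUnit (2 : ZMod p) := by
  exact_mod_cast (isUnit_iff_coprime 2 p).2 (Nat.coprime_two_left.2 hodd)

theorem natCast_self_sq_eq_zero : (p : ZMod (p ^ 2)) ^ 2 = 0 := by
  exact_mod_cast natCast_self (p ^ 2)

theorem castHom_eq_zero_of_natCast_mul_eq_zero [NeZero p] {y : ZMod (p ^ 2)}
    (h : (p : ZMod (p ^ 2)) * y = 0) : castHom (dvd_pow_self p two_ne_zero) (ZMod p) y = 0 := by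
  obtain ⟨v, rfl⟩ := natCast_zmod_surjective y
  rw [← Nat.cast_mul, natCast_eq_zero_iff, pow_two] at h
  rw [map_natCast, natCast_eq_zero_iff]
  exact Nat.dvd_of_mul_dvd_mul_left (NeZero.pos p) h

end ZMod

-- The integer division is exact when `p ∤ a`, by Fermat's little theorem.
def fermatQuotient (p a : ℕ) : ZMod p :=
  (((a : ℤ) ^ (p - 1) - 1) / p : ℤ)

section FermatQuotient

variable {p : ℕ} [hp : Fact p.Prime] {a : ℕ}

theorem dvd_pow_sub_one_sub_one (ha : ¬ p ∣ a) : (p : ℤ) ∣ (a : ℤ) ^ (p - 1) - 1 :=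
  (Int.ModEq.pow_card_sub_one_eq_one hp.out
    (Nat.isCoprime_iff_coprime.2 ((hp.out.coprime_iff_not_dvd.2 ha).symm))).symm.dvd

theorem fermatQuotient_eq_zero_iff (ha : ¬ p ∣ a) :
    fermatQuotient p a = 0 ↔ (p : ℤ) ^ 2 ∣ (a : ℤ) ^ (p - 1) - 1 := by
  have hp0 : (p : ℤ) ≠ 0 := by exact_mod_cast hp.out.ne_zero
  obtain ⟨u, hu⟩ := dvd_pow_sub_one_sub_one ha
  rw [fermatQuotient, hu, Int.mul_ediv_cancel_left _ hp0, ZMod.intCast_zmod_eq_zero_iff_dvd,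
    sq, mul_dvd_mul_iff_left hp0]

theorem exists_natCast_pow_sub_one_eq_one_add_mul (ha : ¬ p ∣ a) :
    ∃ x : ZMod (p ^ 2), (a : ZMod (p ^ 2)) ^ (p - 1) = 1 + (p : ZMod (p ^ 2)) * x := by
  obtain ⟨u, hu⟩ := dvd_pow_sub_one_sub_one ha
  refine ⟨u, ?_⟩
  have := congrArg (Int.cast : ℤ → ZMod (p ^ 2)) hu
  push_cast at this
  linear_combination this

theorem fermatQuotient_eq_castHom {x : ZMod (p ^ 2)}
    (h : (a : ZMod (p ^ 2)) ^ (p - 1) = 1 + (p : ZMod (p ^ 2)) * x) :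
    fermatQuotient p a = ZMod.castHom (dvd_pow_self p two_ne_zero) (ZMod p) x := by
  have hp0 : (p : ℤ) ≠ 0 := by exact_mod_cast hp.out.ne_zero
  have ha : ¬ p ∣ a := by
    intro hpa
    have := congrArg (ZMod.castHom (dvd_pow_self p two_ne_zero) (ZMod p)) h
    rw [map_pow, map_add, map_one, map_mul, map_natCast, map_natCast, ZMod.natCast_self, zero_mul,
      add_zero, (ZMod.natCast_eq_zero_iff a p).2 hpa,
      zero_pow (by have := hp.out.two_le; omega)] at this
    exact zero_ne_one this
  obtain ⟨u, hu⟩ := dvd_pow_sub_one_sub_one ha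
  have hux : (p : ZMod (p ^ 2)) * (u - x) = 0 := by
    have := congrArg (Int.cast : ℤ → ZMod (p ^ 2)) hu
    push_cast at this
    linear_combination -this + h
  have := ZMod.castHom_eq_zero_of_natCast_mul_eq_zero hux
  rw [map_sub, map_intCast, sub_eq_zero] at this
  rw [fermatQuotient, hu, Int.mul_ediv_cancel_left _ hp0, this]

theorem fermatQuotient_mul {b : ℕ} (ha : ¬ p ∣ a) (hb : ¬ p ∣ b) :
    fermatQuotient p (a * b) = fermatQuotient p a + fermatQuotient p b := by
  obtain ⟨x, hx⟩ := exists_natCast_pow_sub_one_eq_one_add_mul ha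
  obtain ⟨y, hy⟩ := exists_natCast_pow_sub_one_eq_one_add_mul hb
  have hxy : ((a * b : ℕ) : ZMod (p ^ 2)) ^ (p - 1) = 1 + (p : ZMod (p ^ 2)) * (x + y) := by
    push_cast
    linear_combination (1 + (p : ZMod (p ^ 2)) * y) * hx + (a : ZMod (p ^ 2)) ^ (p - 1) * hy +
      x * y * ZMod.natCast_self_sq_eq_zero
  rw [fermatQuotient_eq_castHom hxy, fermatQuotient_eq_castHom hx, fermatQuotient_eq_castHom hy,
    map_add]

theorem fermatQuotient_pow (ha : ¬ p ∣ a) (n : ℕ) :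
    fermatQuotient p (a ^ n) = n * fermatQuotient p a := by
  induction n with
  | zero => simp [fermatQuotient]
  | succ n ih =>
    rw [pow_succ, fermatQuotient_mul (fun h => ha (hp.out.dvd_of_dvd_pow h)) ha, ih]
    push_cast
    ring

end FermatQuotient

theorem Finset.sum_Icc_card_filter_lt_smul {ι M : Type*} [AddCommMonoid M] (s : Finset ι)
    (g : ι → ℕ) (n : ℕ) (f : ℕ → M) :
    ∑ j ∈ Icc 1 n, #{k ∈ s | g k < j} • f j = ∑ k ∈ s, ∑ j ∈ Ioc (g k) n, f j := by
  simp_rw [card_filter, sum_smul, ite_smul, one_smul, zero_smul]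
  rw [sum_comm]
  refine sum_congr rfl fun k _ => ?_
  rw [← sum_filter]
  congr 1
  ext j
  simp only [mem_filter, mem_Icc, mem_Ioc]
  omega

theorem card_filter_div_lt_eq_div {a j p : ℕ} (hj : j < p) (hdvd : ¬ p ∣ a * j) :
    #{k ∈ Ico 1 a | k * p / a < j} = a * j / p := by
  have ha : 0 < a := Nat.pos_of_ne_zero (by rintro rfl; simp at hdvd)
  have hp : 0 < p := by omega
  suffices {k ∈ Ico 1 a | k * p / a < j} = Icc 1 (a * j / p) by simp [this]
  ext k
  simp only [mem_filter, mem_Ico, mem_Icc, Nat.div_lt_iff_lt_mul ha, Nat.le_div_iff_mul_le hp]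
  have hne : k * p ≠ a * j := fun h => hdvd ⟨k, by rw [← h, mul_comm]⟩
  have hlt : a * j < a * p := Nat.mul_lt_mul_of_pos_left hj ha
  constructor
  · rintro ⟨⟨hk, -⟩, h⟩
    exact ⟨hk, by linarith⟩
  · rintro ⟨hk, h⟩
    refine ⟨⟨hk, ?_⟩, by rw [mul_comm j]; omega⟩
    exact lt_of_mul_lt_mul_right (by linarith : k * p < a * p) (Nat.zero_le p)

section Harmonic

variable {p : ℕ}

theorem harmonicMod_add_sum_Ioc {m n : ℕ} (h : m ≤ n) :
    harmonicMod p m + ∑ j ∈ Ioc m n, (j : ZMod p)⁻¹ = harmonicMod p n := by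
  rw [harmonicMod, harmonicMod, ← zero_add 1, Icc_add_one_left_eq_Ioc, Icc_add_one_left_eq_Ioc]
  exact sum_Ioc_consecutive _ (Nat.zero_le m) h

variable [Fact p.Prime]

theorem sum_Ioc_inv_eq_neg_harmonicMod (m : ℕ) :
    ∑ j ∈ Ioc m (p - 1), (j : ZMod p)⁻¹ = -harmonicMod p (p - 1 - m) := by
  rw [harmonicMod, ← sum_neg_distrib]
  refine sum_nbij' (p - ·) (p - ·) ?_ ?_ ?_ ?_ fun j hj => ?_
  any_goals intro j hj; simp only [mem_Ioc, mem_Icc] at hj ⊢; omega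
  simp only [mem_Ioc] at hj
  rw [Nat.cast_sub (by omega), ZMod.natCast_self, zero_sub, inv_neg, neg_neg]

theorem harmonicMod_sub_one_eq_zero (hodd : Odd p) : harmonicMod p (p - 1) = 0 := by
  have h := harmonicMod_add_sum_Ioc (p := p) (Nat.zero_le (p - 1))
  rw [sum_Ioc_inv_eq_neg_harmonicMod, Nat.sub_zero, harmonicMod, Icc_eq_empty (by omega), sum_empty,
    zero_add, neg_eq_iff_add_eq_zero, ← two_mul] at h
  exact (ZMod.isUnit_two_of_odd hodd).mul_right_eq_zero.1 h

theorem harmonicMod_sub_one_sub (hodd : Odd p) {m : ℕ} (hm : m ≤ p - 1) :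
    harmonicMod p (p - 1 - m) = harmonicMod p m := by
  have h := harmonicMod_add_sum_Ioc (p := p) hm
  rw [sum_Ioc_inv_eq_neg_harmonicMod, harmonicMod_sub_one_eq_zero hodd] at h
  linear_combination -h

end Harmonic

theorem not_dvd_of_mem_Icc {p j : ℕ} (hj : j ∈ Icc 1 (p - 1)) : ¬ p ∣ j := by
  rw [mem_Icc] at hj
  exact Nat.not_dvd_of_pos_of_lt (by omega) (by omega)

section Glaisher

variable {p : ℕ} [hp : Fact p.Prime] {a : ℕ}

theorem isUnit_natCast_mul_mod (ha : ¬ p ∣ a) {j : ℕ} (hj : j ∈ Icc 1 (p - 1)) :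
    IsUnit ((a * j % p : ℕ) : ZMod (p ^ 2)) :=
  (ZMod.isUnit_natCast_iff_not_dvd_pow hp.out two_pos).2
    ((Nat.dvd_mod_iff dvd_rfl).not.2 (hp.out.not_dvd_mul ha (not_dvd_of_mem_Icc hj)))

theorem prod_Icc_mul_mod {M : Type*} [CommMonoid M] (ha : ¬ p ∣ a) (f : ℕ → M) :
    ∏ j ∈ Icc 1 (p - 1), f (a * j % p) = ∏ j ∈ Icc 1 (p - 1), f j := by
  have hmaps : Set.MapsTo (a * · % p) (Icc 1 (p - 1) : Set ℕ) (Icc 1 (p - 1)) := by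
    intro j hj
    have hne := mt Nat.dvd_of_mod_eq_zero (hp.out.not_dvd_mul ha (not_dvd_of_mem_Icc hj))
    have hlt := Nat.mod_lt (a * j) hp.out.pos
    simp only [coe_Icc, Set.mem_Icc]
    omega
  have hinj : Set.InjOn (a * · % p) (Icc 1 (p - 1) : Set ℕ) := by
    intro j hj j' hj' h
    simp only [coe_Icc, Set.mem_Icc] at hj hj'
    exact Nat.ModEq.eq_of_lt_of_lt
      (Nat.ModEq.cancel_left_of_coprime (hp.out.coprime_iff_not_dvd.2 ha) h) (by omega) (by omega)
  exact prod_nbij _ hmaps hinj (surjOn_of_injOn_of_card_le _ hmaps hinj le_rfl) fun _ _ => rfl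

/- Write `a j = r_j (1 + p ⌊a j / p⌋ r_j⁻¹)` in `ZMod (p ^ 2)` with `r_j = a j % p`; as
`j ↦ r_j` permutes `1, …, p - 1`, the product over `j` of these factors is
`a ^ (p - 1) (p - 1)!` on one side and `(p - 1)! (1 + p ∑ ⌊a j / p⌋ r_j⁻¹)` on the other,
since `p ^ 2 = 0`. -/
theorem natCast_pow_sub_one_eq_one_add_mul_sum (ha : ¬ p ∣ a) :
    (a : ZMod (p ^ 2)) ^ (p - 1) = 1 + (p : ZMod (p ^ 2)) * ∑ j ∈ Icc 1 (p - 1),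
      ((a * j / p : ℕ) : ZMod (p ^ 2)) * ((a * j % p : ℕ) : ZMod (p ^ 2))⁻¹ := by
  have hsplit : ∀ j ∈ Icc 1 (p - 1), ((a * j : ℕ) : ZMod (p ^ 2)) =
      (a * j % p : ℕ) *
        (1 + p * ((a * j / p : ℕ) * ((a * j % p : ℕ) : ZMod (p ^ 2))⁻¹)) := by
    intro j hj
    have hr := ZMod.mul_inv_of_unit _ (isUnit_natCast_mul_mod ha hj)
    conv_lhs => rw [← Nat.mod_add_div (a * j) p]
    push_cast
    linear_combination (-(p : ZMod (p ^ 2)) * ((a * j / p : ℕ) : ZMod (p ^ 2))) * hr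
  have hfact : IsUnit (∏ j ∈ Icc 1 (p - 1), (j : ZMod (p ^ 2))) :=
    IsUnit.prod_iff.2 fun j hj =>
      (ZMod.isUnit_natCast_iff_not_dvd_pow hp.out two_pos).2 (not_dvd_of_mem_Icc hj)
  apply hfact.mul_left_cancel
  calc (∏ j ∈ Icc 1 (p - 1), (j : ZMod (p ^ 2))) * (a : ZMod (p ^ 2)) ^ (p - 1)
      = ∏ j ∈ Icc 1 (p - 1), ((a * j : ℕ) : ZMod (p ^ 2)) := by
        push_cast
        rw [prod_mul_distrib, prod_const, Nat.card_Icc, Nat.add_sub_cancel, mul_comm]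
    _ = _ := by
      rw [prod_congr rfl hsplit, prod_mul_distrib,
        prod_Icc_mul_mod ha (Nat.cast : ℕ → ZMod (p ^ 2)),
        prod_one_add_mul_of_sq_eq_zero ZMod.natCast_self_sq_eq_zero]

theorem mul_fermatQuotient_eq_sum (ha : ¬ p ∣ a) :
    (a : ZMod p) * fermatQuotient p a =
      ∑ j ∈ Icc 1 (p - 1), ((a * j / p : ℕ) : ZMod p) * (j : ZMod p)⁻¹ := by
  rw [fermatQuotient_eq_castHom (natCast_pow_sub_one_eq_one_add_mul_sum ha), map_sum, mul_sum]
  refine sum_congr rfl fun j hj => ?_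
  have hr := isUnit_natCast_mul_mod ha hj
  have ha0 : (a : ZMod p) ≠ 0 := by rwa [Ne, ZMod.natCast_eq_zero_iff]
  rw [map_mul, map_natCast, ← hr.unit_spec, ZMod.inv_coe_unit, map_units_inv, hr.unit_spec,
    map_natCast, ZMod.natCast_mod, Nat.cast_mul]
  field_simp

-- `⌊a j / p⌋` counts the `0 < k < a` with `⌊k p / a⌋ < j`; swap the two summations.
theorem sum_div_mul_inv_eq_neg_sum_harmonicMod (hodd : Odd p) (ha : ¬ p ∣ a) :
    ∑ j ∈ Icc 1 (p - 1), ((a * j / p : ℕ) : ZMod p) * (j : ZMod p)⁻¹ =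
      -∑ k ∈ Ico 1 a, harmonicMod p (k * p / a) := by
  calc ∑ j ∈ Icc 1 (p - 1), ((a * j / p : ℕ) : ZMod p) * (j : ZMod p)⁻¹
      = ∑ j ∈ Icc 1 (p - 1), #{k ∈ Ico 1 a | k * p / a < j} • (j : ZMod p)⁻¹ := by
        refine sum_congr rfl fun j hj => ?_
        rw [card_filter_div_lt_eq_div (by have := mem_Icc.1 hj; omega)
          (hp.out.not_dvd_mul ha (not_dvd_of_mem_Icc hj)), nsmul_eq_mul]
    _ = ∑ k ∈ Ico 1 a, ∑ j ∈ Ioc (k * p / a) (p - 1), (j : ZMod p)⁻¹ :=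
        sum_Icc_card_filter_lt_smul _ _ _ _
    _ = _ := by
        rw [← sum_neg_distrib]
        refine sum_congr rfl fun k hk => ?_
        have hkp : k * p / a ≤ p - 1 := by
          have := mem_Ico.1 hk
          have : k * p / a < p := (Nat.div_lt_iff_lt_mul (by omega)).2
            (by rw [mul_comm p]; exact Nat.mul_lt_mul_of_pos_right this.2 hp.out.pos)
          omega
        rw [sum_Ioc_inv_eq_neg_harmonicMod, harmonicMod_sub_one_sub hodd hkp]

theorem mul_fermatQuotient_eq_neg_sum_harmonicMod (hodd : Odd p) (ha : ¬ p ∣ a) :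
    (a : ZMod p) * fermatQuotient p a = -∑ k ∈ Ico 1 a, harmonicMod p (k * p / a) :=
  (mul_fermatQuotient_eq_sum ha).trans (sum_div_mul_inv_eq_neg_sum_harmonicMod hodd ha)

end Glaisher

theorem two_mul_harmonicMod_div_six {p : ℕ} [hp : Fact p.Prime] (hp3 : 3 < p) :
    2 * harmonicMod p (p / 6) = -fermatQuotient p 432 := by
  have h2 : ¬ p ∣ 2 := Nat.not_dvd_of_pos_of_lt two_pos (by omega)
  have h3 : ¬ p ∣ 3 := Nat.not_dvd_of_pos_of_lt three_pos (by omega)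
  have hodd : Odd p := hp.out.odd_of_ne_two (by omega)
  have hmod : p % 6 = 1 ∨ p % 6 = 5 := by
    have h2' := mt (hp.out.eq_one_or_self_of_dvd 2) (by omega)
    have h3' := mt (hp.out.eq_one_or_self_of_dvd 3) (by omega)
    omega
  have e2 := mul_fermatQuotient_eq_neg_sum_harmonicMod hodd h2
  have e3 := mul_fermatQuotient_eq_neg_sum_harmonicMod hodd h3
  have e6 := mul_fermatQuotient_eq_neg_sum_harmonicMod (a := 2 * 3) hodd (hp.out.not_dvd_mul h2 h3)
  norm_num [sum_Ico_eq_sum_range, sum_range_succ] at e2 e3 e6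
  rw [show 2 * p / 3 = p - 1 - p / 3 by omega, harmonicMod_sub_one_sub hodd (by omega)] at e3
  rw [show 5 * p / 6 = p - 1 - p / 6 by omega, show 4 * p / 6 = p - 1 - p / 3 by omega,
    show 3 * p / 6 = p / 2 by omega, show 2 * p / 6 = p / 3 by omega,
    harmonicMod_sub_one_sub hodd (by omega), harmonicMod_sub_one_sub hodd (by omega)] at e6
  have hq6 : fermatQuotient p 6 = fermatQuotient p 2 + fermatQuotient p 3 :=
    fermatQuotient_mul h2 h3
  have hq432 : fermatQuotient p 432 = 4 * fermatQuotient p 2 + 3 * fermatQuotient p 3 := by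
    rw [show 432 = 2 ^ 4 * 3 ^ 3 by rfl, fermatQuotient_mul (mt hp.out.dvd_of_dvd_pow h2)
      (mt hp.out.dvd_of_dvd_pow h3), fermatQuotient_pow h2, fermatQuotient_pow h3]
    norm_num
  linear_combination hq432 + e6 - e3 - e2 - 6 * hq6

theorem harmonic_zero_iff_wieferich_432 (p : ℕ) (hp : p.Prime) (h5 : 5 < p) :
    harmonicMod p (p / 6) = 0 ↔ (p : ℤ) ^ 2 ∣ 432 ^ (p - 1) - 1 := by
  have := Fact.mk hp
  have h432 : ¬ p ∣ 432 := by
    rw [show 432 = 2 ^ 4 * 3 ^ 3 by rfl]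
    exact hp.not_dvd_mul (mt hp.dvd_of_dvd_pow (Nat.not_dvd_of_pos_of_lt two_pos (by omega)))
      (mt hp.dvd_of_dvd_pow (Nat.not_dvd_of_pos_of_lt three_pos (by omega)))
  rw [← (ZMod.isUnit_two_of_odd (hp.odd_of_ne_two (by omega))).mul_right_eq_zero,
    two_mul_harmonicMod_div_six (by omega), neg_eq_zero, fermatQuotient_eq_zero_iff h432]
  norm_num
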